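/- Let X be a finite simple connected graph with spanning tree T, and f an automorphism of X with M_T(f) = id. Then f(B) = B for every nontrivial block B of X (i.e., every block with at least three vertices). -/

import Mathlib

open SimpleGraph
variable {V : Type*}

variable {V : Type*}

/-- The cycle space (= first homology with coefficients in `R`) of a graph,
realized as antisymmetric flows supported on edges with zero divergence. -/
def cycleSpace (R : Type*) [CommRing R] [Fintype V] (G : SimpleGraph V) :
    Submodule R (V → V → R) where
  carrier := {f | (∀ u v, ¬ G.Adj u v → f u v = 0) ∧ (∀ u v, f u v = - f v u) ∧
    (∀ u, ∑ v, f u v = 0)}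
  add_mem' := by
    rintro f g ⟨hf1, hf2, hf3⟩ ⟨hg1, hg2, hg3⟩
    refine ⟨fun u v h => by simp [hf1 u v h, hg1 u v h], fun u v => ?_, fun u => ?_⟩
    · simp only [Pi.add_apply]; rw [hf2 u v, hg2 u v]; ring
    · simp [Finset.sum_add_distrib, hf3 u, hg3 u]
  zero_mem' := ⟨fun _ _ _ => rfl, fun _ _ => by simp, fun _ => by simp⟩
  smul_mem' := by
    rintro c f ⟨h1, h2, h3⟩
    refine ⟨fun u v h => by simp [h1 u v h], fun u v => by simp [h2 u v], fun u => ?_⟩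
    simp only [Pi.smul_apply, smul_eq_mul]
    rw [← Finset.mul_sum, h3 u, mul_zero]

/-- An automorphism acts trivially (as the identity) on `H_1(X,R)`. -/
def FixesH1 (R : Type*) [CommRing R] [Fintype V] (G : SimpleGraph V) (f : G ≃g G) : Prop :=
  ∀ c ∈ cycleSpace R G, ∀ u v : V, c (f u) (f v) = c u v

/-- A subgraph is 2-connected: at least two vertices, and deleting at most one
vertex leaves it connected. (An edge with its endpoints counts as 2-connected.) -/
def IsTwoConnectedSub (G : SimpleGraph V) (H : G.Subgraph) : Prop :=
  2 ≤ H.verts.ncard ∧ ∀ s : Set V, s.ncard ≤ 1 → ((H.deleteVerts s).coe).Connected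

/-- A block: a maximal 2-connected subgraph. -/
def IsBlock (G : SimpleGraph V) (B : G.Subgraph) : Prop :=
  IsTwoConnectedSub G B ∧ ∀ K : G.Subgraph, IsTwoConnectedSub G K → B ≤ K → K = B

/-!
A closed walk `p` defines an integral cycle `p.flow`, the signed count of its traversals of
each dart. If `f` acts trivially on `H_1(G, ℤ)`, then `p.flow (f u) (f v) = p.flow u v`, so `f`
sends an edge `uv` into the support of every cycle through `uv`. In a 2-connected subgraph `B`
with at least three vertices, `uv` lies on a cycle `v → u → w ⇝ v` inside `B`, where `w ≠ v` is
another neighbour of `u` and `w ⇝ v` avoids `u`. Hence `f`, and likewise `f⁻¹`, maps the edges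
of `B` into `B`; as every vertex of `B` lies on an edge of `B`, this gives `f(B) = B`.
-/

namespace SimpleGraph

variable [DecidableEq V] {G : SimpleGraph V}

def unitFlow (a b : V) : V → V → ℤ := fun x y ↦
  (if x = a ∧ y = b then 1 else 0) - (if x = b ∧ y = a then 1 else 0)

lemma unitFlow_antisymm (a b x y : V) : unitFlow a b x y = -unitFlow a b y x := by
  simp only [unitFlow]
  split_ifs <;> grind

lemma unitFlow_eq_zero {a b x y : V} (h : s(x, y) ≠ s(a, b)) : unitFlow a b x y = 0 := by
  simp only [ne_eq, Sym2.eq_iff, not_or, not_and] at h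
  simp only [unitFlow]
  split_ifs <;> grind

lemma sum_unitFlow [Fintype V] (a b x : V) :
    ∑ y, unitFlow a b x y = (if x = a then 1 else 0) - (if x = b then 1 else 0) := by
  simp only [unitFlow, ite_and, Finset.sum_sub_distrib]
  split_ifs <;> simp

namespace Walk

def flow : {a b : V} → G.Walk a b → V → V → ℤ
  | _, _, nil => 0
  | _, _, cons (u := a) (v := c) _ p => unitFlow a c + p.flow

@[simp] lemma flow_nil {a : V} : (nil : G.Walk a a).flow = 0 := rfl

@[simp] lemma flow_cons {a b c : V} (h : G.Adj a b) (p : G.Walk b c) :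
    (cons h p).flow = unitFlow a b + p.flow := rfl

lemma flow_antisymm {a b : V} (p : G.Walk a b) (x y : V) : p.flow x y = -p.flow y x := by
  induction p with
  | nil => simp
  | cons _ p ih => simp only [flow_cons, Pi.add_apply, ih, unitFlow_antisymm _ _ x]; ring

lemma flow_eq_zero_of_not_adj {a b x y : V} (p : G.Walk a b) (h : ¬p.toSubgraph.Adj x y) :
    p.flow x y = 0 := by
  induction p with
  | nil => rfl
  | cons hadj p ih =>
    change ¬(G.subgraphOfAdj hadj ⊔ p.toSubgraph).Adj x y at h
    simp only [Subgraph.sup_adj, subgraphOfAdj_adj, not_or] at h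
    simp [unitFlow_eq_zero (Ne.symm h.1), ih h.2]

lemma sum_flow [Fintype V] {a b : V} (p : G.Walk a b) (x : V) :
    ∑ y, p.flow x y = (if x = a then 1 else 0) - (if x = b then 1 else 0) := by
  induction p with
  | nil => simp
  | cons _ p ih =>
    simp only [flow_cons, Pi.add_apply, Finset.sum_add_distrib, ih, sum_unitFlow]
    ring

lemma flow_mem_cycleSpace [Fintype V] {a : V} (p : G.Walk a a) : p.flow ∈ cycleSpace ℤ G :=
  ⟨fun _ _ h ↦ p.flow_eq_zero_of_not_adj fun hp ↦ h hp.adj_sub,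
    p.flow_antisymm, fun x ↦ by simp [sum_flow]⟩

end Walk

end SimpleGraph

namespace SimpleGraph.Subgraph

variable {G : SimpleGraph V}

lemma Preconnected.exists_adj {H : G.Subgraph} (hH : H.Preconnected) {u x : V}
    (hu : u ∈ H.verts) (hx : x ∈ H.verts) (hne : u ≠ x) : ∃ w, H.Adj u w := by
  obtain ⟨p, hp⟩ := (preconnected_iff_forall_exists_walk_subgraph H).mp hH hu hx
  exact ⟨p.snd, hp.2 (p.toSubgraph_adj_snd (Walk.not_nil_of_ne hne))⟩

end SimpleGraph.Subgraph

namespace IsTwoConnectedSub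

variable {G : SimpleGraph V} {B : G.Subgraph}

lemma preconnected_deleteVerts_singleton (hB : IsTwoConnectedSub G B) (x : V) :
    (B.deleteVerts {x}).Preconnected :=
  (Subgraph.connected_iff'.mpr (hB.2 {x} (Set.ncard_singleton x).le)).preconnected

lemma exists_walk_avoiding (hB : IsTwoConnectedSub G B) {a b x : V} (ha : a ∈ B.verts)
    (hb : b ∈ B.verts) (hax : a ≠ x) (hbx : b ≠ x) :
    ∃ p : G.Walk a b, p.toSubgraph ≤ B.deleteVerts {x} :=
  (Subgraph.preconnected_iff_forall_exists_walk_subgraph _).mp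
    (hB.preconnected_deleteVerts_singleton x) ⟨ha, hax⟩ ⟨hb, hbx⟩

lemma exists_adj (hB : IsTwoConnectedSub G B) {u : V} (hu : u ∈ B.verts) : ∃ w, B.Adj u w := by
  obtain ⟨x, hx, hxu⟩ := Set.exists_ne_of_one_lt_ncard hB.1 u
  have hconn := Subgraph.connected_iff'.mpr (hB.2 ∅ (by simp))
  rw [Subgraph.deleteVerts_empty] at hconn
  exact hconn.preconnected.exists_adj hu hx hxu.symm

lemma exists_adj_ne (hB : IsTwoConnectedSub G B) (h3 : 3 ≤ B.verts.ncard) {u v : V}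
    (hu : u ∈ B.verts) (huv : u ≠ v) : ∃ w, B.Adj u w ∧ w ≠ v := by
  obtain ⟨x, hx, hxuv⟩ := Set.exists_mem_notMem_of_ncard_lt_ncard
    (s := {u, v}) (t := B.verts) (by rw [Set.ncard_pair huv]; omega)
  simp only [Set.mem_insert_iff, Set.mem_singleton_iff, not_or] at hxuv
  obtain ⟨w, huw⟩ := (hB.preconnected_deleteVerts_singleton v).exists_adj
    (x := x) ⟨hu, huv⟩ ⟨hx, hxuv.2⟩ (Ne.symm hxuv.1)
  obtain ⟨-, -, -, hwv, huw⟩ := Subgraph.deleteVerts_adj.mp huw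
  exact ⟨w, huw, hwv⟩

lemma exists_closed_walk_flow_ne_zero [DecidableEq V] (hB : IsTwoConnectedSub G B)
    (h3 : 3 ≤ B.verts.ncard) {u v : V} (huv : B.Adj u v) :
    ∃ p : G.Walk v v, p.toSubgraph ≤ B ∧ p.flow u v ≠ 0 := by
  obtain ⟨w, huw, hwv⟩ := hB.exists_adj_ne h3 (B.edge_vert huv) huv.ne
  obtain ⟨q, hq⟩ := hB.exists_walk_avoiding (B.edge_vert huw.symm) (B.edge_vert huv.symm)
    huw.ne.symm huv.ne.symm
  -- Since `q` avoids `u`, only the closing edge `v → u` contributes to the flow at `(u, v)`.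
  refine ⟨.cons huv.adj_sub.symm (.cons huw.adj_sub q), ?_, ?_⟩
  · exact sup_le (subgraphOfAdj_le_of_adj B huv.symm)
      (sup_le (subgraphOfAdj_le_of_adj B huw) (hq.trans B.deleteVerts_le))
  · have hq0 : q.flow u v = 0 := q.flow_eq_zero_of_not_adj fun h ↦ by
      simpa using Subgraph.deleteVerts_adj.mp (hq.2 h)
    simp [hq0, unitFlow, huv.ne, huv.ne.symm, hwv.symm]

end IsTwoConnectedSub

namespace FixesH1

variable [Fintype V] {G : SimpleGraph V} {f : G ≃g G}

lemma symm {R : Type*} [CommRing R] (hf : FixesH1 R G f) : FixesH1 R G f.symm :=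
  fun c hc u v ↦ by
    rw [← hf c hc (f.symm u) (f.symm v), RelIso.apply_symm_apply, RelIso.apply_symm_apply]

lemma adj_apply (hf : FixesH1 ℤ G f) {B : G.Subgraph} (hB : IsTwoConnectedSub G B)
    (h3 : 3 ≤ B.verts.ncard) {u v : V} (huv : B.Adj u v) : B.Adj (f u) (f v) := by
  classical
  obtain ⟨p, hpB, hp⟩ := hB.exists_closed_walk_flow_ne_zero h3 huv
  by_contra hfuv
  exact hp <| (hf _ p.flow_mem_cycleSpace u v).symm.trans
    (p.flow_eq_zero_of_not_adj fun h ↦ hfuv (hpB.2 h))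

lemma map_le (hf : FixesH1 ℤ G f) {B : G.Subgraph} (hB : IsTwoConnectedSub G B)
    (h3 : 3 ≤ B.verts.ncard) : B.map f.toHom ≤ B := by
  rw [Subgraph.map_le_iff_le_comap]
  refine ⟨fun u hu ↦ ?_, fun u v huv ↦ ⟨huv.adj_sub, hf.adj_apply hB h3 huv⟩⟩
  obtain ⟨w, huw⟩ := hB.exists_adj hu
  exact B.edge_vert (hf.adj_apply hB h3 huw)

end FixesH1

theorem kernel_fixes_nontrivial_blocks_setwise_general [Fintype V]
    (G : SimpleGraph V)
    (f : G ≃g G) (hf : FixesH1 ℤ G f)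
    (B : G.Subgraph) (hB : IsBlock G B) (hB3 : 3 ≤ B.verts.ncard) :
    B.map f.toHom = B := by
  have hcomp : f.toHom.comp f.symm.toHom = Hom.id := by ext; simp
  refine le_antisymm (hf.map_le hB.1 hB3) ?_
  calc B = (B.map f.symm.toHom).map f.toHom := by
        rw [← Subgraph.map_comp, hcomp, Subgraph.map_id]
    _ ≤ B.map f.toHom := Subgraph.map_mono (hf.symm.map_le hB.1 hB3)

theorem kernel_fixes_nontrivial_blocks_setwise [Fintype V]
    (G : SimpleGraph V) (hG : G.Connected)
    (f : G ≃g G) (hf : FixesH1 ℤ G f)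
    (B : G.Subgraph) (hB : IsBlock G B) (hB3 : 3 ≤ B.verts.ncard) :
    B.map f.toHom = B :=
  kernel_fixes_nontrivial_blocks_setwise_general G f hf B hB hB3
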